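/- arXiv:1106.0051 — 3 statements merged into one kernel-verified Lean document; each statement's English description precedes it below -/
import Mathlib

section
/- The set of upper Lyapunov exponents attained on the exceptional set equals the closed interval [log β⁻, log β⁺]; that is, {χ̄(p,ξ) : (p,ξ) ∈ E} = [log β⁻, log β⁺]. -/
open Set Filter MeasureTheory

noncomputable section

/-- Condition (F0) on the fiber map `f₀`. -/
def F0cond (f₀ : ℝ → ℝ) (β₀ lam₀ : ℝ) : Prop :=
  ContDiff ℝ 1 f₀ ∧ Set.MapsTo f₀ (Set.Icc 0 1) (Set.Icc 0 1) ∧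
  StrictMonoOn f₀ (Set.Icc 0 1) ∧ f₀ 0 = 0 ∧ f₀ 1 = 1 ∧
  (∀ x ∈ Set.Ioo (0:ℝ) 1, x < f₀ x) ∧
  deriv f₀ 0 = β₀ ∧ 1 < β₀ ∧ deriv f₀ 1 = lam₀ ∧ 0 < lam₀ ∧ lam₀ < 1 ∧
  (∀ x ∈ Set.Icc (0:ℝ) 1, lam₀ ≤ deriv f₀ x)

/-- Condition (F1) on the fiber map `f₁`. -/
def F1cond (f₁ : ℝ → ℝ) (γ lam₀ : ℝ) : Prop :=
  (∀ x, f₁ x = γ * (1 - x)) ∧ lam₀ ≤ γ ∧ γ < 1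

/-- Condition (F2) on the fiber map `f₂`. -/
def F2cond (f₂ : ℝ → ℝ) (β₂ lam₀ : ℝ) : Prop :=
  ContDiff ℝ 1 f₂ ∧ Set.MapsTo f₂ (Set.Icc 0 1) (Set.Icc 0 1) ∧
  StrictMonoOn f₂ (Set.Icc 0 1) ∧ f₂ 0 = 0 ∧
  deriv f₂ 0 = β₂ ∧ 1 < β₂ ∧ (∀ x ∈ Set.Icc (0:ℝ) 1, lam₀ ≤ deriv f₂ x) ∧
  ∃ p₂, p₂ ∈ Set.Ioo (0:ℝ) 1 ∧ f₂ p₂ = p₂ ∧ (∀ x ∈ Set.Ioo 0 p₂, x < f₂ x) ∧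
    (∀ x ∈ Set.Ioc p₂ 1, f₂ x < x)

/-- Condition (F01). -/
def F01cond (f₀ : ℝ → ℝ) (β₀ lam₀ γ : ℝ) : Prop :=
  AntitoneOn (deriv f₀) (Set.Icc 0 1) ∧
  1 < γ * (lam₀ ^ 3 * (1 - lam₀) / (1 - β₀⁻¹))

/-- Condition (F012), with `H = [0,δ]`, `H' = [1-γ⁻¹δ,1]`, and the derived constants
`β' = βpr`, `β_H = βH`, `λ' = lampr`, `L`. -/
def F012cond (f₀ f₁ f₂ : ℝ → ℝ) (γ lam₀ β₀ β₂ δ βpr βH lampr : ℝ) (L : ℕ) : Prop :=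
  (∀ x ∈ Set.Icc (0:ℝ) 1, deriv f₀ x ≤ max β₀ β₂ ∧ deriv f₂ x ≤ max β₀ β₂) ∧
  0 < δ ∧ δ < γ ∧
  (f₁ '' Set.Icc 0 δ) ∩ Set.Icc 0 δ = ∅ ∧
  (f₁ '' Set.Icc (1 - γ⁻¹ * δ) 1) ∩ Set.Icc (1 - γ⁻¹ * δ) 1 = ∅ ∧
  (f₁ '' Set.Icc 0 1) ∩ Set.Icc (1 - γ⁻¹ * δ) 1 = ∅ ∧
  (f₂ '' Set.Icc 0 1) ∩ Set.Icc (1 - γ⁻¹ * δ) 1 = ∅ ∧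
  IsGreatest {y | ∃ x ∈ Set.Icc δ 1, y = max (deriv f₀ x) (deriv f₂ x)} βpr ∧
  1 < βpr ∧ βpr < min β₀ β₂ ∧
  IsLeast {y | ∃ x ∈ Set.Icc (0:ℝ) δ, y = min (deriv f₀ x) (deriv f₂ x)} βH ∧
  1 < βH ∧ βH < min β₀ β₂ ∧
  IsGreatest {y | ∃ x ∈ Set.Icc (1 - γ⁻¹ * δ) 1, y = deriv f₀ x} lampr ∧
  lampr < 1 ∧
  |Real.log lam₀| * Real.log (max β₀ β₂) / Real.log βH - |Real.log lampr|
      + (2 / 3) * Real.log (max β₀ β₂) < (3 / 4) * Real.log βpr ∧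
  1 ≤ L ∧
  4 * |Real.log lam₀| * Real.log (max β₀ β₂) / (Real.log βH * Real.log βpr) < (L : ℝ) ∧
  Real.log ((max β₀ β₂) ^ L * γ) / ((L : ℝ) + 1) < Real.log βpr

/-- `f_{ξ_{n-1}} ∘ ⋯ ∘ f_{ξ₀}`. -/
def seqComp (fs : Fin 3 → ℝ → ℝ) (ξ : ℕ → Fin 3) : ℕ → ℝ → ℝ
  | 0 => id
  | n + 1 => fun x => fs (ξ n) (seqComp fs ξ n x)

/-- The upper Lyapunov exponent of the point `p` under the itinerary `ξ`. -/
def lyapUpper (fs : Fin 3 → ℝ → ℝ) (p : ℝ) (ξ : ℕ → Fin 3) : ℝ :=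
  Filter.limsup (fun n : ℕ => (1 / (n : ℝ)) * Real.log |deriv (seqComp fs ξ n) p|) Filter.atTop

/-- Membership in the exceptional set `E`. -/
def exceptional (fs : Fin 3 → ℝ → ℝ) (p : ℝ) (ξ : ℕ → Fin 3) : Prop :=
  ∃ m : ℕ, seqComp fs ξ m p = 0 ∧ ∀ j, m ≤ j → (ξ j = 0 ∨ ξ j = 2)

/-- `f_[w] = f_{w_{m-1}} ∘ ⋯ ∘ f_{w₀}` for a finite word `w`. -/
def wordComp {α : Type*} (fs : α → ℝ → ℝ) (w : List α) : ℝ → ℝ :=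
  fun x => w.foldl (fun y i => fs i y) x

/-- The two-sided sequence space `Σ₃`. -/
abbrev Sig3 := ℤ → Fin 3

/-- The state space `Σ₃ × [0,1]`. -/
abbrev XSp := Sig3 × (Set.Icc (0:ℝ) 1)

instance : UniformSpace (Fin 3) := ⊥

/-- The left shift on `Σ₃`. -/
def shiftMap (ξ : Sig3) : Sig3 := fun i => ξ (i + 1)

/-- The step skew product `G(ξ,x) = (σξ, f_{ξ₀}(x))` on `Σ₃ × [0,1]`. -/
def Gmap (fs : Fin 3 → ℝ → ℝ) : XSp → XSp :=
  fun p => (shiftMap p.1, Set.projIcc 0 1 (by norm_num) (fs (p.1 0) (p.2 : ℝ)))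

/-- The maximal invariant set `Λ_G = ⋂ₙ Gⁿ(Σ₃ × [0,1])`. -/
def LamG (fs : Fin 3 → ℝ → ℝ) : Set XSp := ⋂ n : ℕ, (Gmap fs)^[n] '' Set.univ

/-- The lateral horseshoe `Λ₀₂`. -/
def Lam02 : Set XSp := {p | (∀ i, p.1 i ≠ 1) ∧ (p.2 : ℝ) = 0}

/-- The central derivative potential `φ(ξ,x) = log|f_{ξ₀}'(x)|`. -/
def phiC (fs : Fin 3 → ℝ → ℝ) (p : XSp) : ℝ := Real.log |deriv (fs (p.1 0)) (p.2 : ℝ)|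

/-- The central Lyapunov exponent `χ(μ) = ∫ φ dμ` of a measure. -/
def chiOf (fs : Fin 3 → ℝ → ℝ) (μ : Measure XSp) : ℝ := ∫ p, phiC fs p ∂μ

/-- `ν` is the `(p 0, p 1, p 2)`-Bernoulli measure on `Σ₃`. -/
def IsBernoulli (p : Fin 3 → ℝ) (ν : Measure Sig3) : Prop :=
  IsProbabilityMeasure ν ∧ ∀ (s : Finset ℤ) (a : ℤ → Fin 3),
    ν {ξ | ∀ i ∈ s, ξ i = a i} = ENNReal.ofReal (∏ i ∈ s, p (a i))


/-!
Along an exceptional orbit the point eventually rests at `0`, which `f₀` and `f₂` both fix,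
so from some time on every factor of the derivative cocycle is `β₀` or `β₂`. All fiber
derivatives are nonzero on `[0,1]`, so `log |(f_ξ^n)'(p)|` is a sum of one-step terms and the
finite prefix only shifts the Cesàro means by `O(1/n)`; hence `χ̄` lies in
`[log β⁻, log β⁺]`. Conversely, at `p = 0`, applying `f₂` exactly at the jumps of the Beatty
sequence `⌊θ n⌋` and `f₀` otherwise makes the Cesàro means converge to
`(1 - θ) log β₀ + θ log β₂`, and every point of the interval has this form.
-/

open Real Finset Topology

lemma limsup_mem_Icc_of_tendsto_of_le {α : Type*} {l : Filter α} [l.NeBot] {a u v : α → ℝ}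
    {A B : ℝ} (hu : Tendsto u l (𝓝 A)) (hv : Tendsto v l (𝓝 B)) (hua : ∀ᶠ n in l, u n ≤ a n)
    (hav : ∀ᶠ n in l, a n ≤ v n) : limsup a l ∈ Set.Icc A B := by
  have ha_above : l.IsBoundedUnder (· ≤ ·) a := hv.isBoundedUnder_le.mono_le hav
  have ha_below : l.IsBoundedUnder (· ≥ ·) a := hu.isBoundedUnder_ge.mono_ge hua
  constructor
  · calc A = limsup u l := hu.limsup_eq.symm
      _ ≤ limsup a l :=
        limsup_le_limsup hua hu.isBoundedUnder_ge.isCoboundedUnder_le ha_above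
  · calc limsup a l ≤ limsup v l :=
        limsup_le_limsup hav ha_below.isCoboundedUnder_le hv.isBoundedUnder_le
      _ = B := hv.limsup_eq

lemma limsup_cesaro_mem_Icc {g : ℕ → ℝ} {A B : ℝ} {m : ℕ} (hg : ∀ j, m ≤ j → g j ∈ Set.Icc A B) :
    limsup (fun n : ℕ => 1 / (n : ℝ) * ∑ j ∈ range n, g j) atTop ∈ Set.Icc A B := by
  set C := ∑ j ∈ range m, g j
  have hshift : ∀ D : ℝ, Tendsto (fun n : ℕ => D + (C - m * D) / n) atTop (𝓝 D) := fun D => by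
    simpa using tendsto_const_nhds.add (tendsto_const_div_atTop_nhds_zero_nat (C - m * D))
  -- Both bounds come from `∑_{j<n} g j = C + ∑_{m ≤ j < n} g j` with `n - m` terms in `[A, B]`.
  have hsplit : ∀ n, m ≤ n → 0 < n → ∀ D : ℝ,
      1 / (n : ℝ) * ∑ j ∈ range n, g j - (D + (C - m * D) / n) =
        (∑ j ∈ Ico m n, (g j - D)) / n := by
    intro n hmn hn D
    rw [← sum_range_add_sum_Ico _ hmn, sum_sub_distrib, sum_const, Nat.card_Ico, nsmul_eq_mul,
      Nat.cast_sub hmn]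
    field_simp
    ring
  refine limsup_mem_Icc_of_tendsto_of_le (hshift A) (hshift B) ?_ ?_ <;>
    filter_upwards [eventually_ge_atTop m, eventually_gt_atTop 0] with n hmn hn
  · have hA := hsplit n hmn hn A
    have hrest : 0 ≤ (∑ j ∈ Ico m n, (g j - A)) / n :=
      div_nonneg (sum_nonneg fun j hj => sub_nonneg.2 (hg j (mem_Ico.1 hj).1).1) n.cast_nonneg
    linarith
  · have hB := hsplit n hmn hn B
    have hrest : (∑ j ∈ Ico m n, (g j - B)) / n ≤ 0 :=
      div_nonpos_of_nonpos_of_nonneg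
        (sum_nonpos fun j hj => sub_nonpos.2 (hg j (mem_Ico.1 hj).1).2) n.cast_nonneg
    linarith

lemma exists_bool_seq_tendsto_cesaro {x y c : ℝ} (hc : c ∈ Set.uIcc x y) :
    ∃ b : ℕ → Bool,
      Tendsto (fun n : ℕ => 1 / (n : ℝ) * ∑ j ∈ range n, bif b j then y else x) atTop (𝓝 c) := by
  rw [← segment_eq_uIcc, segment_eq_image'] at hc
  obtain ⟨θ, ⟨hθ0, hθ1⟩, rfl⟩ := hc
  set N : ℕ → ℕ := fun j => ⌊θ * j⌋₊
  have hN : ∀ j, N (j + 1) = N j ∨ N (j + 1) = N j + 1 := by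
    intro j
    have hmono : N j ≤ N (j + 1) := Nat.floor_le_floor (by push_cast; nlinarith)
    have hstep : N (j + 1) ≤ N j + 1 := by
      rw [← Nat.floor_add_one (by positivity)]
      exact Nat.floor_le_floor (by push_cast; nlinarith)
    omega
  refine ⟨fun j => decide (N j < N (j + 1)), ?_⟩
  have hterm : ∀ j, (bif decide (N j < N (j + 1)) then y else x) =
      x + (y - x) * ((N (j + 1) : ℝ) - N j) := by
    intro j
    rcases hN j with h | h <;> simp [h]
  have hsum : ∀ n, ∑ j ∈ range n, (bif decide (N j < N (j + 1)) then y else x) =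
      n * x + (y - x) * N n := by
    intro n
    simp only [hterm, sum_add_distrib, ← mul_sum, sum_range_sub (fun j => (N j : ℝ)), sum_const,
      card_range, nsmul_eq_mul]
    simp [N]
  have hfloor : Tendsto (fun n : ℕ => (N n : ℝ) / n) atTop (𝓝 θ) :=
    (tendsto_nat_floor_mul_div_atTop hθ0).comp tendsto_natCast_atTop_atTop
  have hlim : Tendsto (fun n : ℕ => x + (y - x) * ((N n : ℝ) / n)) atTop
      (𝓝 (x + θ • (y - x))) := by
    rw [smul_eq_mul, mul_comm θ]
    exact (hfloor.const_mul (y - x)).const_add x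
  refine hlim.congr' ?_
  filter_upwards [eventually_ne_atTop 0] with n hn
  rw [hsum]
  field_simp

section SeqComp

variable {fs : Fin 3 → ℝ → ℝ} {ξ : ℕ → Fin 3} {p : ℝ}

lemma seqComp_mem {s : Set ℝ} (hmaps : ∀ i, MapsTo (fs i) s s) (hp : p ∈ s) :
    ∀ n, seqComp fs ξ n p ∈ s
  | 0 => hp
  | n + 1 => hmaps (ξ n) (seqComp_mem hmaps hp n)

lemma seqComp_eq_of_le {m : ℕ} {x₀ : ℝ} (hfix : ∀ j, m ≤ j → fs (ξ j) x₀ = x₀)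
    (hm : seqComp fs ξ m p = x₀) : ∀ n, m ≤ n → seqComp fs ξ n p = x₀ := by
  intro n hmn
  induction n, hmn using Nat.le_induction with
  | base => exact hm
  | succ n hmn ih => exact (congrArg (fs (ξ n)) ih).trans (hfix n hmn)

lemma hasDerivAt_seqComp (hdiff : ∀ i, Differentiable ℝ (fs i)) (p : ℝ) :
    ∀ n, HasDerivAt (seqComp fs ξ n)
      (∏ j ∈ range n, deriv (fs (ξ j)) (seqComp fs ξ j p)) p
  | 0 => by simpa [seqComp] using hasDerivAt_id p
  | n + 1 => by
    rw [prod_range_succ, mul_comm]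
    exact ((hdiff (ξ n)).differentiableAt.hasDerivAt).comp p (hasDerivAt_seqComp hdiff p n)

lemma lyapUpper_eq_limsup_cesaro (hdiff : ∀ i, Differentiable ℝ (fs i))
    (hne : ∀ j, deriv (fs (ξ j)) (seqComp fs ξ j p) ≠ 0) :
    lyapUpper fs p ξ = limsup (fun n : ℕ =>
      1 / (n : ℝ) * ∑ j ∈ range n, log |deriv (fs (ξ j)) (seqComp fs ξ j p)|) atTop := by
  unfold lyapUpper
  congr with n
  rw [(hasDerivAt_seqComp hdiff p n).deriv, abs_prod, log_prod]
  exact fun j _ => abs_ne_zero.2 (hne j)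

end SeqComp

section Exceptional

variable {fs : Fin 3 → ℝ → ℝ}

lemma lyapUpper_mem_uIcc_of_exceptional (hdiff : ∀ i, Differentiable ℝ (fs i))
    (hmaps : ∀ i, MapsTo (fs i) (Set.Icc 0 1) (Set.Icc 0 1))
    (hne : ∀ i, ∀ x ∈ Set.Icc (0 : ℝ) 1, deriv (fs i) x ≠ 0) (h0 : fs 0 0 = 0)
    (h2 : fs 2 0 = 0) {p : ℝ} (hp : p ∈ Set.Icc 0 1) {ξ : ℕ → Fin 3}
    (hE : exceptional fs p ξ) :
    lyapUpper fs p ξ ∈ Set.uIcc (log |deriv (fs 0) 0|) (log |deriv (fs 2) 0|) := by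
  obtain ⟨m, hm, hξ⟩ := hE
  have horbit : ∀ n, m ≤ n → seqComp fs ξ n p = 0 :=
    seqComp_eq_of_le (fun j hj => by rcases hξ j hj with h | h <;> rw [h] <;> assumption) hm
  rw [lyapUpper_eq_limsup_cesaro hdiff fun j => hne _ _ (seqComp_mem hmaps hp j)]
  refine limsup_cesaro_mem_Icc (m := m) fun j hj => ?_
  rw [horbit j hj]
  rcases hξ j hj with h | h <;> rw [h]
  · exact Set.left_mem_uIcc
  · exact Set.right_mem_uIcc

lemma exists_exceptional_lyapUpper_eq (hdiff : ∀ i, Differentiable ℝ (fs i))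
    (h0 : fs 0 0 = 0) (h2 : fs 2 0 = 0) (hd0 : deriv (fs 0) 0 ≠ 0) (hd2 : deriv (fs 2) 0 ≠ 0)
    {c : ℝ} (hc : c ∈ Set.uIcc (log |deriv (fs 0) 0|) (log |deriv (fs 2) 0|)) :
    ∃ ξ : ℕ → Fin 3, exceptional fs 0 ξ ∧ lyapUpper fs 0 ξ = c := by
  obtain ⟨b, hb⟩ := exists_bool_seq_tendsto_cesaro hc
  set ξ : ℕ → Fin 3 := fun j => bif b j then 2 else 0
  have hξ : ∀ j, ξ j = 0 ∨ ξ j = 2 := fun j => by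
    simp only [ξ]
    cases b j <;> simp
  have horbit : ∀ n, seqComp fs ξ n 0 = 0 := fun n =>
    seqComp_eq_of_le (m := 0) (fun j _ => by rcases hξ j with h | h <;> rw [h] <;> assumption)
      rfl n n.zero_le
  refine ⟨ξ, ⟨0, rfl, fun j _ => hξ j⟩, ?_⟩
  rw [lyapUpper_eq_limsup_cesaro hdiff fun j => ?_]
  · refine (hb.congr fun n => ?_).limsup_eq
    refine congrArg _ (sum_congr rfl fun j _ => ?_)
    rw [horbit]
    simp only [ξ]
    cases b j <;> rfl
  · rw [horbit]
    rcases hξ j with h | h <;> rw [h] <;> assumption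

end Exceptional

lemma uIcc_log_eq_Icc_log_min_max {a b : ℝ} (ha : 0 < a) (hb : 0 < b) :
    Set.uIcc (log a) (log b) = Set.Icc (log (min a b)) (log (max a b)) := by
  rcases le_total a b with h | h
  · rw [Set.uIcc_of_le (log_le_log ha h), min_eq_left h, max_eq_right h]
  · rw [Set.uIcc_of_ge (log_le_log hb h), min_eq_right h, max_eq_left h]

section FiberMaps

variable {f₀ f₁ f₂ : ℝ → ℝ} {β₀ lam₀ γ β₂ : ℝ}

lemma F1cond.hasDerivAt (h1 : F1cond f₁ γ lam₀) (x : ℝ) : HasDerivAt f₁ (-γ) x := by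
  rw [funext h1.1]
  simpa using ((hasDerivAt_id x).const_sub 1).const_mul γ

lemma differentiable_fiberMaps (h0 : F0cond f₀ β₀ lam₀) (h1 : F1cond f₁ γ lam₀)
    (h2 : F2cond f₂ β₂ lam₀) (i : Fin 3) : Differentiable ℝ (![f₀, f₁, f₂] i) := by
  fin_cases i
  exacts [h0.1.differentiable one_ne_zero, fun x => (h1.hasDerivAt x).differentiableAt,
    h2.1.differentiable one_ne_zero]

lemma mapsTo_fiberMaps (h0 : F0cond f₀ β₀ lam₀) (h1 : F1cond f₁ γ lam₀)
    (h2 : F2cond f₂ β₂ lam₀) (i : Fin 3) :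
    MapsTo (![f₀, f₁, f₂] i) (Set.Icc 0 1) (Set.Icc 0 1) := by
  obtain ⟨-, hmaps0, -, -, -, -, -, -, -, hlam, -⟩ := h0
  obtain ⟨hf1, hlamγ, hγ1⟩ := h1
  fin_cases i
  · exact hmaps0
  · intro x hx
    simp only [Fin.mk_one, Matrix.cons_val_one, Matrix.cons_val_zero, hf1, Set.mem_Icc]
    constructor <;> nlinarith [hx.1, hx.2]
  · exact h2.2.1

lemma deriv_fiberMaps_ne_zero (h0 : F0cond f₀ β₀ lam₀) (h1 : F1cond f₁ γ lam₀)
    (h2 : F2cond f₂ β₂ lam₀) (i : Fin 3) (x : ℝ) (hx : x ∈ Set.Icc 0 1) :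
    deriv (![f₀, f₁, f₂] i) x ≠ 0 := by
  obtain ⟨-, -, -, -, -, -, -, -, -, hlam, -, hlamd0⟩ := h0
  obtain ⟨-, -, -, -, -, -, hlamd2, -⟩ := h2
  fin_cases i
  · exact (hlam.trans_le (hlamd0 x hx)).ne'
  · simp [(h1.hasDerivAt x).deriv, (hlam.trans_le h1.2.1).ne']
  · exact (hlam.trans_le (hlamd2 x hx)).ne'

end FiberMaps

/-- the set of upper Lyapunov exponents attained on the exceptional set `E`
equals `[log β⁻, log β⁺]`. -/
theorem stmt0 (f₀ f₁ f₂ : ℝ → ℝ) (β₀ lam₀ γ β₂ : ℝ)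
    (h0 : F0cond f₀ β₀ lam₀) (h1 : F1cond f₁ γ lam₀) (h2 : F2cond f₂ β₂ lam₀) :
    {c : ℝ | ∃ p ∈ Set.Icc (0:ℝ) 1, ∃ ξ : ℕ → Fin 3,
        exceptional ![f₀, f₁, f₂] p ξ ∧ lyapUpper ![f₀, f₁, f₂] p ξ = c}
      = Set.Icc (Real.log (min β₀ β₂)) (Real.log (max β₀ β₂)) := by
  have hdiff := differentiable_fiberMaps h0 h1 h2
  have hmaps := mapsTo_fiberMaps h0 h1 h2
  have hne := deriv_fiberMaps_ne_zero h0 h1 h2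
  obtain ⟨-, -, -, hf00, -, -, hd0, hβ0, -⟩ := h0
  obtain ⟨-, -, -, hf20, hd2, hβ2, -⟩ := h2
  have h0mem : (0 : ℝ) ∈ Set.Icc 0 1 := ⟨le_rfl, zero_le_one⟩
  have hinterval : Set.uIcc (log |deriv f₀ 0|) (log |deriv f₂ 0|) =
      Set.Icc (log (min β₀ β₂)) (log (max β₀ β₂)) := by
    rw [hd0, hd2, abs_of_pos (by linarith), abs_of_pos (by linarith)]
    exact uIcc_log_eq_Icc_log_min_max (by linarith) (by linarith)
  ext c
  constructor
  · rintro ⟨p, hp, ξ, hE, rfl⟩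
    exact hinterval ▸ lyapUpper_mem_uIcc_of_exceptional hdiff hmaps hne hf00 hf20 hp hE
  · intro hc
    obtain ⟨ξ, hE, hξ⟩ := exists_exceptional_lyapUpper_eq hdiff hf00 hf20 (hne 0 0 h0mem)
      (hne 2 0 h0mem) (hinterval.symm ▸ hc)
    exact ⟨0, h0mem, ξ, hE, hξ⟩

end
end

section
/- Assume (F0) and (F1). Let δ∈(0,γ) and set δ' := 1−γ⁻¹·δ. Then for every N∈ℕ and every q∈ℝ with δ' ≤ q < f₀(δ'), one has f₁(f₀^N(q)) ≥ λ₀^{N+1}·δ. -/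
open Set Filter MeasureTheory

noncomputable section

/-! Since `f₀' ≥ λ₀` on `[0,1]` and `f₀ 1 = 1`, the mean value theorem gives
`1 - f₀ x ≥ λ₀ (1 - x)`: each application of `f₀` shrinks the distance to the fixed point `1`
by a factor of at most `λ₀`. That distance is at least `1 - f₀ δ' ≥ λ₀ γ⁻¹ δ` for `q`, hence at
least `λ₀^{N+1} γ⁻¹ δ` for `f₀^N q`, and `f₁` multiplies it by `γ`. -/

theorem mul_sub_le_sub_iterate {f : ℝ → ℝ} {s : Set ℝ} {b c : ℝ} (hf : MapsTo f s s)
    (hc : 0 ≤ c) (hcontr : ∀ x ∈ s, c * (b - x) ≤ b - f x) (n : ℕ) {x : ℝ} (hx : x ∈ s) :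
    c ^ n * (b - x) ≤ b - f^[n] x := by
  induction n generalizing x with
  | zero => simp
  | succ n ih =>
    calc c ^ (n + 1) * (b - x) = c ^ n * (c * (b - x)) := by ring
      _ ≤ c ^ n * (b - f x) := mul_le_mul_of_nonneg_left (hcontr x hx) (pow_nonneg hc n)
      _ ≤ b - f^[n + 1] x := ih (hf hx)

theorem F0cond.mul_one_sub_le_one_sub {f₀ : ℝ → ℝ} {β₀ lam₀ : ℝ} (h0 : F0cond f₀ β₀ lam₀)
    {x : ℝ} (hx : x ∈ Icc (0 : ℝ) 1) : lam₀ * (1 - x) ≤ 1 - f₀ x := by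
  obtain ⟨hC1, -, -, -, h11, -, -, -, -, -, -, hderiv⟩ := h0
  have hdiff : Differentiable ℝ f₀ := hC1.differentiable one_ne_zero
  have := (convex_Icc (0 : ℝ) 1).mul_sub_le_image_sub_of_le_deriv hdiff.continuous.continuousOn
    hdiff.differentiableOn (fun y hy => hderiv y (interior_subset hy)) x hx 1 (by simp) hx.2
  rwa [h11] at this

/-- for `δ' = 1 - γ⁻¹δ ≤ q < f₀(δ')`, one has `f₁(f₀^N(q)) ≥ λ₀^{N+1}·δ`. -/
theorem stmt1 (f₀ f₁ : ℝ → ℝ) (β₀ lam₀ γ δ : ℝ)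
    (h0 : F0cond f₀ β₀ lam₀) (h1 : F1cond f₁ γ lam₀)
    (hδ0 : 0 < δ) (hδγ : δ < γ)
    (N : ℕ) (q : ℝ) (hq1 : 1 - γ⁻¹ * δ ≤ q) (hq2 : q < f₀ (1 - γ⁻¹ * δ)) :
    lam₀ ^ (N + 1) * δ ≤ f₁ (f₀^[N] q) := by
  have hcontr : ∀ x ∈ Icc (0 : ℝ) 1, lam₀ * (1 - x) ≤ 1 - f₀ x :=
    fun x hx => h0.mul_one_sub_le_one_sub hx
  obtain ⟨-, hmaps, -, -, -, -, -, -, -, hlam₀, -, -⟩ := h0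
  obtain ⟨hf₁, hlamγ, -⟩ := h1
  have hγ : 0 < γ := hlam₀.trans_le hlamγ
  have hδ'_mem : 1 - γ⁻¹ * δ ∈ Icc (0 : ℝ) 1 := by
    have : γ⁻¹ * δ < 1 := by rwa [inv_mul_lt_iff₀ hγ, mul_one]
    constructor <;> nlinarith [inv_pos.2 hγ]
  have hq : q ∈ Icc (0 : ℝ) 1 :=
    ⟨hδ'_mem.1.trans hq1, hq2.le.trans (hmaps hδ'_mem).2⟩
  have hstart : lam₀ * (γ⁻¹ * δ) ≤ 1 - q := by
    have := hcontr _ hδ'_mem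
    rw [sub_sub_cancel] at this
    linarith
  have hiter : lam₀ ^ N * (1 - q) ≤ 1 - f₀^[N] q :=
    mul_sub_le_sub_iterate hmaps hlam₀.le hcontr N hq
  calc lam₀ ^ (N + 1) * δ = γ * (lam₀ ^ N * (lam₀ * (γ⁻¹ * δ))) := by
        field_simp; ring
    _ ≤ γ * (lam₀ ^ N * (1 - q)) := by gcongr
    _ ≤ γ * (1 - f₀^[N] q) := by gcongr
    _ = f₁ (f₀^[N] q) := (hf₁ _).symm

end
end

section
/- (Spectrum of ergodic measures.) Assume (F0), (F1), (F2) and (F012), and set χ̃ := sup{χ̄(p,ξ) : (p,ξ) ∉ E}. Then every G-invariant ergodic Borel probability measure μ with μ(Λ_G)=1 satisfies χ(μ) ∈ [log λ₀, χ̃] ∪ [log β⁻, log β⁺]. More precisely, if μ(Λ₀₂)=1 then χ(μ) ∈ [log β⁻, log β⁺], and if μ(Λ₀₂)=0 then χ(μ) ∈ [log λ₀, χ̃]. -/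
open Set Filter MeasureTheory

noncomputable section

/-!
Along `G`, the Birkhoff sums of `φ = log |f'_{ξ₀}|` are the logarithms of the fibre derivatives
`(f_{ξ_{n-1}} ∘ ⋯ ∘ f_{ξ₀})'`, so the upper Lyapunov exponent of a point is the limsup of its
Birkhoff averages, and `φ` takes values in `[log λ₀, log β⁺]`. The lateral horseshoe `Λ₀₂` is
`G`-invariant, so an ergodic `μ` gives it mass `0` or `1`. On `Λ₀₂` the potential is `log β₀` or
`log β₂`, which settles the case of mass `1`. In the case of mass `0`, the reverse Fatou lemma
shows that the limsup of the Birkhoff averages has integral at least `χ(μ)`, so it is at least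
`χ(μ)` at some point outside any given null set. The exceptional set is null: its points
eventually land in the zero fibre with a future avoiding the symbol `1`. The set of points whose
future avoids `1` is forward invariant; if it had positive measure, ergodicity would make the
symbol `1` almost surely absent, and then the zero fibre would lie in `Λ₀₂` up to a null set.
-/

section LimsupBounds

variable {α : Type*} {f : α → α} {φ : α → ℝ} {a b : ℝ}

theorem limsup_mem_Icc {u : ℕ → ℝ} (hu : ∀ᶠ n in atTop, u n ∈ Icc a b) :
    limsup u atTop ∈ Icc a b :=
  ⟨le_limsup_of_frequently_le (hu.mono fun _ h => h.1).frequently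
      (isBoundedUnder_of_eventually_le (hu.mono fun _ h => h.2)),
    limsup_le_of_le (isCoboundedUnder_le_of_eventually_le _ (hu.mono fun _ h => h.1))
      (hu.mono fun _ h => h.2)⟩

theorem ENNReal.limsup_ofReal_sub {u : ℕ → ℝ} (hu : ∀ n, u n ∈ Icc a b) :
    limsup (fun n => ENNReal.ofReal (u n - a)) atTop = ENNReal.ofReal (limsup u atTop - a) :=
  ((ENNReal.ofReal_mono.comp fun _ _ h => sub_le_sub_right h a).map_limsup_of_continuousAt u
    (ENNReal.continuous_ofReal.comp (continuous_id.sub continuous_const)).continuousAt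
    (isBoundedUnder_of_eventually_le (Eventually.of_forall fun n => (hu n).2))
    (isCoboundedUnder_le_of_eventually_le _ (Eventually.of_forall fun n => (hu n).1))).symm

theorem birkhoffAverage_mem_Icc (hφ : ∀ x, φ x ∈ Icc a b) {n : ℕ} (hn : n ≠ 0) (x : α) :
    birkhoffAverage ℝ f φ n x ∈ Icc a b := by
  have hn' : (0 : ℝ) < n := by positivity
  have hsum : birkhoffSum f φ n x ∈ Icc (n * a) (n * b) := by
    constructor
    · simpa [birkhoffSum] using
        Finset.sum_le_sum fun k (_ : k ∈ Finset.range n) => (hφ (f^[k] x)).1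
    · simpa [birkhoffSum] using
        Finset.sum_le_sum fun k (_ : k ∈ Finset.range n) => (hφ (f^[k] x)).2
  rw [birkhoffAverage, smul_eq_mul, mem_Icc, ← div_eq_inv_mul, le_div_iff₀ hn', div_le_iff₀ hn']
  constructor <;> linarith [hsum.1, hsum.2]

end LimsupBounds

section BirkhoffAverage

variable {α : Type*} [MeasurableSpace α] {μ : Measure α} {f : α → α} {φ : α → ℝ} {a b : ℝ}

theorem measurable_birkhoffAverage (hf : Measurable f) (hφ : Measurable φ) (n : ℕ) :
    Measurable (birkhoffAverage ℝ f φ n) :=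
  (Finset.measurable_sum _ fun k _ => hφ.comp (hf.iterate k)).const_mul _

theorem MeasureTheory.MeasurePreserving.integral_birkhoffAverage (hf : MeasurePreserving f μ μ)
    (hφ : Integrable φ μ) {n : ℕ} (hn : n ≠ 0) :
    ∫ x, birkhoffAverage ℝ f φ n x ∂μ = ∫ x, φ x ∂μ := by
  have hcomp k : ∫ x, φ (f^[k] x) ∂μ = ∫ x, φ x ∂μ := by
    have hfk := hf.iterate k
    rw [← integral_map hfk.aemeasurable (by rw [hfk.map_eq]; exact hφ.aestronglyMeasurable),
      hfk.map_eq]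
  have hint : ∀ k ∈ Finset.range n, Integrable (fun x => φ (f^[k] x)) μ :=
    fun k _ => (hf.iterate k).integrable_comp_of_integrable hφ
  simp only [birkhoffAverage, birkhoffSum, smul_eq_mul]
  rw [integral_const_mul, integral_finsetSum _ hint]
  simp only [hcomp, Finset.sum_const, Finset.card_range, nsmul_eq_mul]
  field_simp

theorem integrable_of_forall_mem_Icc [IsFiniteMeasure μ] (hφ : Measurable φ)
    (hbd : ∀ x, φ x ∈ Icc a b) : Integrable φ μ :=
  .of_bound hφ.aestronglyMeasurable (max |a| |b|)
    (ae_of_all _ fun x => abs_le_max_abs_abs (hbd x).1 (hbd x).2)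

variable [IsProbabilityMeasure μ]

theorem integral_mem_Icc_of_ae_mem (hφ : Integrable φ μ) (hbd : ∀ᵐ x ∂μ, φ x ∈ Icc a b) :
    ∫ x, φ x ∂μ ∈ Icc a b := by
  constructor
  · simpa using integral_mono_ae (integrable_const a) hφ (hbd.mono fun _ h => h.1)
  · simpa using integral_mono_ae hφ (integrable_const b) (hbd.mono fun _ h => h.2)

theorem limsup_integral_le_integral_limsup {u : ℕ → α → ℝ} (hu : ∀ n, Measurable (u n))
    (hbd : ∀ n x, u n x ∈ Icc a b) :
    limsup (fun n => ∫ x, u n x ∂μ) atTop ≤ ∫ x, limsup (fun n => u n x) atTop ∂μ := by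
  have hint n : Integrable (u n) μ := integrable_of_forall_mem_Icc (hu n) (hbd n)
  have hg_mem x : limsup (fun n => u n x) atTop ∈ Icc a b :=
    limsup_mem_Icc (Eventually.of_forall fun n => hbd n x)
  have hg : Integrable (fun x => limsup (fun n => u n x) atTop) μ :=
    integrable_of_forall_mem_Icc (Measurable.limsup hu) hg_mem
  have hlint {v : α → ℝ} (hv : Integrable v μ) (hva : ∀ x, a ≤ v x) :
      ∫⁻ x, ENNReal.ofReal (v x - a) ∂μ = ENNReal.ofReal (∫ x, v x ∂μ - a) := by
    have hv' : Integrable (fun x => v x - a) μ := hv.sub (integrable_const a)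
    rw [← ofReal_integral_eq_lintegral_ofReal hv' (ae_of_all _ fun x => sub_nonneg.2 (hva x)),
      integral_sub hv (integrable_const a)]
    simp
  -- Reverse Fatou lemma for the nonnegative functions `u n - a`, dominated by the constant `b - a`.
  have fatou := limsup_lintegral_le (μ := μ) (f := fun n x => ENNReal.ofReal (u n x - a))
    (fun _ => ENNReal.ofReal (b - a))
    (fun n => ENNReal.measurable_ofReal.comp ((hu n).sub_const a))
    (fun n => ae_of_all _ fun x => ENNReal.ofReal_le_ofReal (by linarith [(hbd n x).2]))
    (by simp)
  simp only [hlint (hint _) fun x => (hbd _ x).1, ENNReal.limsup_ofReal_sub (hbd · _)] at fatou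
  rw [ENNReal.limsup_ofReal_sub fun n => integral_mem_Icc_of_ae_mem (hint n)
      (ae_of_all _ (hbd n)), hlint hg fun x => (hg_mem x).1,
    ENNReal.ofReal_le_ofReal_iff
      (by linarith [(integral_mem_Icc_of_ae_mem hg (ae_of_all _ hg_mem)).1])] at fatou
  linarith

theorem MeasureTheory.MeasurePreserving.exists_notMem_null_integral_le_limsup_birkhoffAverage
    (hf : MeasurePreserving f μ μ) (hφ : Measurable φ) (hbd : ∀ x, φ x ∈ Icc a b)
    {N : Set α} (hN : μ N = 0) :
    ∃ x ∉ N, ∫ x, φ x ∂μ ≤ limsup (fun n => birkhoffAverage ℝ f φ n x) atTop := by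
  set u : ℕ → α → ℝ := fun n => birkhoffAverage ℝ f φ (n + 1)
  have hu n : Measurable (u n) := measurable_birkhoffAverage hf.measurable hφ _
  have hubd n x : u n x ∈ Icc a b := birkhoffAverage_mem_Icc hbd n.succ_ne_zero x
  have hint : Integrable (fun x => limsup (fun n => u n x) atTop) μ :=
    integrable_of_forall_mem_Icc (Measurable.limsup hu)
      fun x => limsup_mem_Icc (Eventually.of_forall fun n => hubd n x)
  have hle : ∫ x, φ x ∂μ ≤ ∫ x, limsup (fun n => u n x) atTop ∂μ := by
    simpa only [u, hf.integral_birkhoffAverage (integrable_of_forall_mem_Icc hφ hbd)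
      (Nat.succ_ne_zero _), limsup_const] using limsup_integral_le_integral_limsup (μ := μ) hu hubd
  obtain ⟨x, hxN, hx⟩ := exists_notMem_null_integral_le hint hN
  exact ⟨x, hxN, hle.trans (hx.trans_eq (limsup_nat_add (birkhoffAverage ℝ f φ · x) 1))⟩

end BirkhoffAverage

structure FiberFamily (fs : Fin 3 → ℝ → ℝ) (lam M : ℝ) : Prop where
  lam_pos : 0 < lam
  differentiable : ∀ i, Differentiable ℝ (fs i)
  mapsTo : ∀ i, MapsTo (fs i) (Icc 0 1) (Icc 0 1)
  abs_deriv_mem : ∀ i, ∀ x ∈ Icc (0 : ℝ) 1, |deriv (fs i) x| ∈ Icc lam M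
  eq_zero_iff : ∀ i ≠ 1, ∀ x ∈ Icc (0 : ℝ) 1, fs i x = 0 ↔ x = 0

section SeqComp

variable {fs : Fin 3 → ℝ → ℝ} (ξ : ℕ → Fin 3)

theorem differentiable_seqComp (hfs : ∀ i, Differentiable ℝ (fs i)) (n : ℕ) :
    Differentiable ℝ (seqComp fs ξ n) := by
  induction n with
  | zero => exact differentiable_id
  | succ n ih => exact (hfs (ξ n)).comp ih

theorem deriv_seqComp (hfs : ∀ i, Differentiable ℝ (fs i)) (x : ℝ) (n : ℕ) :
    deriv (seqComp fs ξ n) x = ∏ k ∈ Finset.range n, deriv (fs (ξ k)) (seqComp fs ξ k x) := by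
  induction n with
  | zero => simp [seqComp]
  | succ n ih =>
    have : seqComp fs ξ (n + 1) = fs (ξ n) ∘ seqComp fs ξ n := rfl
    rw [this, deriv_comp x (hfs (ξ n)).differentiableAt
      (differentiable_seqComp ξ hfs n).differentiableAt, Finset.prod_range_succ, ih, mul_comm]

theorem seqComp_mem_s5 (hfs : ∀ i, MapsTo (fs i) (Icc 0 1) (Icc 0 1)) {x : ℝ}
    (hx : x ∈ Icc (0 : ℝ) 1) (n : ℕ) : seqComp fs ξ n x ∈ Icc (0 : ℝ) 1 := by
  induction n with
  | zero => exact hx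
  | succ n ih => exact hfs (ξ n) ih

end SeqComp

theorem Gmap_iterate_fst (fs : Fin 3 → ℝ → ℝ) (k : ℕ) (p : XSp) :
    ((Gmap fs)^[k] p).1 = fun i => p.1 (i + k) := by
  induction k with
  | zero => simp
  | succ k ih =>
    rw [Function.iterate_succ_apply', Gmap, ih]
    funext i
    simp only [shiftMap, Nat.cast_succ, add_assoc, add_comm (1 : ℤ)]

namespace FiberFamily

variable {fs : Fin 3 → ℝ → ℝ} {lam M : ℝ} (h : FiberFamily fs lam M)
include h

theorem coe_Gmap_snd (p : XSp) : ((Gmap fs p).2 : ℝ) = fs (p.1 0) p.2 :=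
  congrArg Subtype.val (projIcc_of_mem zero_le_one (h.mapsTo _ p.2.2))

theorem coe_Gmap_iterate_snd (k : ℕ) (p : XSp) :
    (((Gmap fs)^[k] p).2 : ℝ) = seqComp fs (fun n : ℕ => p.1 n) k p.2 := by
  induction k with
  | zero => rfl
  | succ k ih =>
    rw [Function.iterate_succ_apply', h.coe_Gmap_snd, ih, Gmap_iterate_fst]
    simp only [zero_add]
    rfl

theorem log_abs_deriv_seqComp (ξ : ℕ → Fin 3) {x : ℝ} (hx : x ∈ Icc (0 : ℝ) 1) (n : ℕ) :
    Real.log |deriv (seqComp fs ξ n) x| =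
      ∑ k ∈ Finset.range n, Real.log |deriv (fs (ξ k)) (seqComp fs ξ k x)| := by
  rw [deriv_seqComp ξ h.differentiable, Finset.abs_prod, Real.log_prod]
  exact fun k _ => (h.lam_pos.trans_le
    (h.abs_deriv_mem _ _ (seqComp_mem_s5 ξ h.mapsTo hx k)).1).ne'

theorem birkhoffSum_phiC (n : ℕ) (p : XSp) :
    birkhoffSum (Gmap fs) (phiC fs) n p =
      Real.log |deriv (seqComp fs (fun k : ℕ => p.1 k) n) p.2| := by
  rw [h.log_abs_deriv_seqComp _ p.2.2, birkhoffSum]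
  refine Finset.sum_congr rfl fun k _ => ?_
  rw [phiC, Gmap_iterate_fst, h.coe_Gmap_iterate_snd]
  simp only [zero_add]

theorem lyapUpper_eq_limsup_birkhoffAverage (p : XSp) :
    lyapUpper fs p.2 (fun n : ℕ => p.1 n) =
      limsup (fun n => birkhoffAverage ℝ (Gmap fs) (phiC fs) n p) atTop := by
  simp only [lyapUpper, birkhoffAverage, h.birkhoffSum_phiC, one_div, smul_eq_mul]

theorem phiC_mem (p : XSp) : phiC fs p ∈ Icc (Real.log lam) (Real.log M) := by
  obtain ⟨hlo, hhi⟩ := h.abs_deriv_mem (p.1 0) p.2 p.2.2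
  exact ⟨Real.log_le_log h.lam_pos hlo, Real.log_le_log (h.lam_pos.trans_le hlo) hhi⟩

theorem lyapUpper_mem {x : ℝ} (hx : x ∈ Icc (0 : ℝ) 1) (ξ : ℕ → Fin 3) :
    lyapUpper fs x ξ ∈ Icc (Real.log lam) (Real.log M) := by
  let p : XSp := (fun i => ξ i.toNat, ⟨x, hx⟩)
  have hp : lyapUpper fs x ξ = lyapUpper fs p.2 (fun n : ℕ => p.1 n) := by
    simp only [p, Int.toNat_natCast]
  rw [hp, h.lyapUpper_eq_limsup_birkhoffAverage]
  exact limsup_mem_Icc (eventually_atTop.2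
    ⟨1, fun n hn => birkhoffAverage_mem_Icc h.phiC_mem (by omega) p⟩)

end FiberFamily

theorem measurable_phiC (fs : Fin 3 → ℝ → ℝ) : Measurable (phiC fs) := by
  have hF : Measurable fun q : ℝ × Fin 3 => Real.log |deriv (fs q.2) q.1| :=
    measurable_from_prod_countable_left fun i =>
      Real.measurable_log.comp (measurable_deriv (fs i)).abs
  exact hF.comp (measurable_subtype_coe.comp measurable_snd |>.prodMk
    ((measurable_pi_apply 0).comp measurable_fst))

theorem measurableSet_Lam02 : MeasurableSet Lam02 := by
  unfold Lam02
  measurability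

theorem FiberFamily.preimage_Lam02 {fs : Fin 3 → ℝ → ℝ} {lam M : ℝ} (h : FiberFamily fs lam M) :
    Gmap fs ⁻¹' Lam02 = Lam02 := by
  ext p
  simp only [Lam02, mem_preimage, mem_ofPred_eq, h.coe_Gmap_snd]
  constructor
  · rintro ⟨hξ, hx⟩
    have hall i : p.1 i ≠ 1 := by simpa [Gmap, shiftMap] using hξ (i - 1)
    exact ⟨hall, (h.eq_zero_iff _ (hall 0) _ p.2.2).1 hx⟩
  · rintro ⟨hξ, hx⟩
    exact ⟨fun i => hξ (i + 1), (h.eq_zero_iff _ (hξ 0) _ p.2.2).2 hx⟩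

section Exceptional

variable {fs : Fin 3 → ℝ → ℝ} {μ : Measure XSp}

theorem measure_coord_add_eq (hG : MeasurePreserving (Gmap fs) μ μ) (j : ℤ) (a : Fin 3)
    (k : ℕ) : μ {p : XSp | p.1 (j + k) = a} = μ {p : XSp | p.1 j = a} := by
  have hpre : (Gmap fs)^[k] ⁻¹' {p : XSp | p.1 j = a} = {p | p.1 (j + k) = a} := by
    ext p
    simp [Gmap_iterate_fst]
  rw [← hpre]
  exact (hG.iterate k).measure_preimage (by measurability)

theorem measure_coord_eq_zero (hG : MeasurePreserving (Gmap fs) μ μ) {a : Fin 3}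
    (ha : ∀ n : ℕ, μ {p : XSp | p.1 n = a} = 0) (j : ℤ) : μ {p : XSp | p.1 j = a} = 0 := by
  obtain ⟨n, hn⟩ : ∃ n : ℕ, j + j.natAbs = n := ⟨(j + j.natAbs).toNat, by omega⟩
  rw [← measure_coord_add_eq hG j a j.natAbs, hn]
  exact ha n

theorem measure_zero_fiber_avoiding_one_eq_zero [IsProbabilityMeasure μ]
    (herg : Ergodic (Gmap fs) μ) (hL : μ Lam02 = 0) :
    μ {p : XSp | (p.2 : ℝ) = 0 ∧ ∀ n : ℕ, p.1 n ≠ 1} = 0 := by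
  set T := {p : XSp | ∀ n : ℕ, p.1 n ≠ 1}
  have hT : MeasurableSet T := by measurability
  have hTG : T ⊆ Gmap fs ⁻¹' T := fun p hp n => by
    simpa [Gmap, shiftMap] using hp (n + 1)
  rcases herg.ae_empty_or_univ_of_ae_le_preimage hT.nullMeasurableSet hTG.eventuallyLE
    with hT0 | hT1
  · exact measure_mono_null (fun p hp => hp.2) (ae_eq_empty.1 hT0)
  · have hone (n : ℕ) : μ {p : XSp | p.1 n = 1} = 0 :=
      measure_mono_null (fun p (hp : p.1 n = 1) (hpT : p ∈ T) => hpT n hp) (ae_eq_univ.1 hT1)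
    have hsub : {p : XSp | (p.2 : ℝ) = 0 ∧ ∀ n : ℕ, p.1 n ≠ 1} ⊆
        Lam02 ∪ ⋃ j : ℤ, {p : XSp | p.1 j = 1} := by
      rintro p ⟨hp0, -⟩
      by_cases hξ : ∃ j, p.1 j = 1
      · exact Or.inr (mem_iUnion.2 hξ)
      · exact Or.inl ⟨fun i hi => hξ ⟨i, hi⟩, hp0⟩
    exact measure_mono_null hsub (measure_union_null hL
      (measure_iUnion_null (measure_coord_eq_zero herg.toMeasurePreserving hone)))

theorem FiberFamily.measure_exceptional_eq_zero {lam M : ℝ} (h : FiberFamily fs lam M)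
    [IsProbabilityMeasure μ] (herg : Ergodic (Gmap fs) μ) (hL : μ Lam02 = 0) :
    μ {p : XSp | exceptional fs p.2 (fun n : ℕ => p.1 n)} = 0 := by
  set A := {p : XSp | (p.2 : ℝ) = 0 ∧ ∀ n : ℕ, p.1 n ≠ 1}
  have hA : MeasurableSet A := by measurability
  have hsub : {p : XSp | exceptional fs p.2 (fun n : ℕ => p.1 n)} ⊆
      ⋃ m : ℕ, (Gmap fs)^[m] ⁻¹' A := by
    rintro p ⟨m, hm0, hmξ⟩
    refine mem_iUnion.2 ⟨m, (h.coe_Gmap_iterate_snd m p).trans hm0, fun n => ?_⟩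
    rw [Gmap_iterate_fst]
    rcases hmξ (n + m) le_add_self with hξ | hξ <;> simp_all
  refine measure_mono_null hsub (measure_iUnion_null fun m => ?_)
  rw [(herg.toMeasurePreserving.iterate m).measure_preimage hA.nullMeasurableSet]
  exact measure_zero_fiber_avoiding_one_eq_zero herg hL

end Exceptional

theorem FiberFamily.of_conditions {f₀ f₁ f₂ : ℝ → ℝ} {β₀ β₂ lam₀ γ : ℝ}
    (h0 : F0cond f₀ β₀ lam₀) (h1 : F1cond f₁ γ lam₀) (h2 : F2cond f₂ β₂ lam₀)
    (hM : ∀ x ∈ Icc (0 : ℝ) 1, deriv f₀ x ≤ max β₀ β₂ ∧ deriv f₂ x ≤ max β₀ β₂) :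
    FiberFamily ![f₀, f₁, f₂] lam₀ (max β₀ β₂) := by
  obtain ⟨h0c, h0maps, h0mono, h0z, -, -, -, hβ₀, -, hlam, -, h0d⟩ := h0
  obtain ⟨hf₁, hγ, hγ1⟩ := h1
  obtain ⟨h2c, h2maps, h2mono, h2z, -, -, h2d, -⟩ := h2
  have hf₁' : f₁ = fun x => γ * (1 - x) := funext hf₁
  have hd₁ x : deriv f₁ x = -γ := by simp [hf₁']
  have habs {f : ℝ → ℝ} (hlo : ∀ x ∈ Icc (0 : ℝ) 1, lam₀ ≤ deriv f x)
      (hhi : ∀ x ∈ Icc (0 : ℝ) 1, deriv f x ≤ max β₀ β₂) x (hx : x ∈ Icc (0 : ℝ) 1) :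
      |deriv f x| ∈ Icc lam₀ (max β₀ β₂) := by
    rw [abs_of_pos (hlam.trans_le (hlo x hx))]
    exact ⟨hlo x hx, hhi x hx⟩
  have hzero {f : ℝ → ℝ} (hf : StrictMonoOn f (Icc 0 1)) (hf0 : f 0 = 0) x
      (hx : x ∈ Icc (0 : ℝ) 1) : f x = 0 ↔ x = 0 :=
    ⟨fun hx0 => hf.injOn hx ⟨le_rfl, zero_le_one⟩ (hx0.trans hf0.symm), fun hx0 => hx0 ▸ hf0⟩
  refine ⟨hlam, fun i => ?_, fun i => ?_, fun i => ?_, fun i hi => ?_⟩ <;> fin_cases i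
  · exact h0c.differentiable one_ne_zero
  · show Differentiable ℝ f₁
    rw [hf₁']
    fun_prop
  · exact h2c.differentiable one_ne_zero
  · exact h0maps
  · intro x hx
    show f₁ x ∈ Icc 0 1
    rw [hf₁]
    constructor <;> nlinarith [hx.1, hx.2]
  · exact h2maps
  · exact habs h0d fun x hx => (hM x hx).1
  · intro x _
    show |deriv f₁ x| ∈ _
    rw [hd₁, abs_neg, abs_of_pos (hlam.trans_le hγ)]
    exact ⟨hγ, by linarith [le_max_left β₀ β₂]⟩
  · exact habs h2d fun x hx => (hM x hx).2
  · exact hzero h0mono h0z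
  · exact absurd rfl hi
  · exact hzero h2mono h2z

theorem phiC_mem_of_mem_Lam02 {f₀ f₁ f₂ : ℝ → ℝ} {β₀ β₂ : ℝ} (h0 : deriv f₀ 0 = β₀)
    (h2 : deriv f₂ 0 = β₂) (hβ₀ : 0 < β₀) (hβ₂ : 0 < β₂) {p : XSp} (hp : p ∈ Lam02) :
    phiC ![f₀, f₁, f₂] p ∈ Icc (Real.log (min β₀ β₂)) (Real.log (max β₀ β₂)) := by
  obtain ⟨hξ, hx⟩ := hp
  have hderiv : |deriv (![f₀, f₁, f₂] (p.1 0)) 0| ∈ Icc (min β₀ β₂) (max β₀ β₂) := by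
    have hξ0 := hξ 0
    generalize p.1 0 = i at hξ0 ⊢
    fin_cases i
    · simp [h0, abs_of_pos hβ₀]
    · exact absurd rfl hξ0
    · simp [h2, abs_of_pos hβ₂]
  rw [phiC, hx]
  exact ⟨Real.log_le_log (lt_min hβ₀ hβ₂) hderiv.1,
    Real.log_le_log ((lt_min hβ₀ hβ₂).trans_le hderiv.1) hderiv.2⟩

section Spectrum

variable {μ : Measure XSp} [IsProbabilityMeasure μ]

theorem FiberFamily.chiOf_mem {fs : Fin 3 → ℝ → ℝ} {lam M : ℝ} (h : FiberFamily fs lam M) :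
    chiOf fs μ ∈ Icc (Real.log lam) (Real.log M) :=
  integral_mem_Icc_of_ae_mem (integrable_of_forall_mem_Icc (measurable_phiC fs) h.phiC_mem)
    (ae_of_all _ h.phiC_mem)

theorem FiberFamily.exists_chiOf_le_lyapUpper {fs : Fin 3 → ℝ → ℝ} {lam M : ℝ}
    (h : FiberFamily fs lam M) (herg : Ergodic (Gmap fs) μ) (hL : μ Lam02 = 0) :
    ∃ x ∈ Icc (0 : ℝ) 1, ∃ ξ : ℕ → Fin 3, ¬ exceptional fs x ξ ∧ chiOf fs μ ≤ lyapUpper fs x ξ := by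
  obtain ⟨p, hpE, hp⟩ :=
    herg.toMeasurePreserving.exists_notMem_null_integral_le_limsup_birkhoffAverage
      (measurable_phiC fs) h.phiC_mem (h.measure_exceptional_eq_zero herg hL)
  exact ⟨p.2, p.2.2, _, hpE, hp.trans_eq (h.lyapUpper_eq_limsup_birkhoffAverage p).symm⟩

theorem chiOf_mem_of_measure_Lam02_eq_one {f₀ f₁ f₂ : ℝ → ℝ} {β₀ β₂ lam M : ℝ}
    (h : FiberFamily ![f₀, f₁, f₂] lam M) (h0 : deriv f₀ 0 = β₀) (h2 : deriv f₂ 0 = β₂)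
    (hβ₀ : 0 < β₀) (hβ₂ : 0 < β₂) (hL : μ Lam02 = 1) :
    chiOf ![f₀, f₁, f₂] μ ∈ Icc (Real.log (min β₀ β₂)) (Real.log (max β₀ β₂)) := by
  have hae : ∀ᵐ p ∂μ, p ∈ Lam02 :=
    (ae_iff_measure_eq measurableSet_Lam02.nullMeasurableSet).2 (hL.trans measure_univ.symm)
  exact integral_mem_Icc_of_ae_mem (integrable_of_forall_mem_Icc (measurable_phiC _) h.phiC_mem)
    (hae.mono fun p hp => phiC_mem_of_mem_Lam02 h0 h2 hβ₀ hβ₂ hp)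

end Spectrum

theorem stmt5_general (f₀ f₁ f₂ : ℝ → ℝ) (β₀ lam₀ γ β₂ δ βpr βH lampr : ℝ) (L : ℕ)
    (h0 : F0cond f₀ β₀ lam₀) (h1 : F1cond f₁ γ lam₀) (h2 : F2cond f₂ β₂ lam₀)
    (h012 : F012cond f₀ f₁ f₂ γ lam₀ β₀ β₂ δ βpr βH lampr L)
    (μ : Measure XSp) (hprob : IsProbabilityMeasure μ)
    (herg : Ergodic (Gmap ![f₀, f₁, f₂]) μ) :
    chiOf ![f₀, f₁, f₂] μ ∈
        Set.Icc (Real.log lam₀)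
          (sSup {c : ℝ | ∃ p ∈ Set.Icc (0:ℝ) 1, ∃ ξ : ℕ → Fin 3,
            ¬ exceptional ![f₀, f₁, f₂] p ξ ∧ lyapUpper ![f₀, f₁, f₂] p ξ = c}) ∪
        Set.Icc (Real.log (min β₀ β₂)) (Real.log (max β₀ β₂)) ∧
    (μ Lam02 = 1 →
      chiOf ![f₀, f₁, f₂] μ ∈ Set.Icc (Real.log (min β₀ β₂)) (Real.log (max β₀ β₂))) ∧
    (μ Lam02 = 0 →
      chiOf ![f₀, f₁, f₂] μ ∈ Set.Icc (Real.log lam₀)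
        (sSup {c : ℝ | ∃ p ∈ Set.Icc (0:ℝ) 1, ∃ ξ : ℕ → Fin 3,
          ¬ exceptional ![f₀, f₁, f₂] p ξ ∧ lyapUpper ![f₀, f₁, f₂] p ξ = c})) := by
  have hF := FiberFamily.of_conditions h0 h1 h2 h012.1
  set S := {c : ℝ | ∃ p ∈ Set.Icc (0:ℝ) 1, ∃ ξ : ℕ → Fin 3,
    ¬ exceptional ![f₀, f₁, f₂] p ξ ∧ lyapUpper ![f₀, f₁, f₂] p ξ = c}
  have hS : BddAbove S := by
    refine ⟨Real.log (max β₀ β₂), ?_⟩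
    rintro _ ⟨x, hx, ξ, -, rfl⟩
    exact (hF.lyapUpper_mem hx ξ).2
  have hfull (hL : μ Lam02 = 1) :
      chiOf ![f₀, f₁, f₂] μ ∈ Icc (Real.log (min β₀ β₂)) (Real.log (max β₀ β₂)) := by
    obtain ⟨-, -, -, -, -, -, hd₀, hβ₀, -⟩ := h0
    obtain ⟨-, -, -, -, hd₂, hβ₂, -⟩ := h2
    exact chiOf_mem_of_measure_Lam02_eq_one hF hd₀ hd₂ (by linarith) (by linarith) hL
  have hnull (hL : μ Lam02 = 0) : chiOf ![f₀, f₁, f₂] μ ∈ Icc (Real.log lam₀) (sSup S) := by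
    obtain ⟨x, hx, ξ, hξ, hle⟩ := hF.exists_chiOf_le_lyapUpper herg hL
    exact ⟨hF.chiOf_mem.1, hle.trans (le_csSup hS ⟨x, hx, ξ, hξ, rfl⟩)⟩
  refine ⟨?_, hfull, hnull⟩
  rcases herg.prob_eq_zero_or_one measurableSet_Lam02 hF.preimage_Lam02 with hL | hL
  exacts [Or.inl (hnull hL), Or.inr (hfull hL)]

/-- spectrum of ergodic measures. -/
theorem stmt5 (f₀ f₁ f₂ : ℝ → ℝ) (β₀ lam₀ γ β₂ δ βpr βH lampr : ℝ) (L : ℕ)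
    (h0 : F0cond f₀ β₀ lam₀) (h1 : F1cond f₁ γ lam₀) (h2 : F2cond f₂ β₂ lam₀)
    (h012 : F012cond f₀ f₁ f₂ γ lam₀ β₀ β₂ δ βpr βH lampr L)
    (μ : Measure XSp) (hprob : IsProbabilityMeasure μ)
    (herg : Ergodic (Gmap ![f₀, f₁, f₂]) μ)
    (hsupp : μ (LamG ![f₀, f₁, f₂]) = 1) :
    chiOf ![f₀, f₁, f₂] μ ∈
        Set.Icc (Real.log lam₀)
          (sSup {c : ℝ | ∃ p ∈ Set.Icc (0:ℝ) 1, ∃ ξ : ℕ → Fin 3,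
            ¬ exceptional ![f₀, f₁, f₂] p ξ ∧ lyapUpper ![f₀, f₁, f₂] p ξ = c}) ∪
        Set.Icc (Real.log (min β₀ β₂)) (Real.log (max β₀ β₂)) ∧
    (μ Lam02 = 1 →
      chiOf ![f₀, f₁, f₂] μ ∈ Set.Icc (Real.log (min β₀ β₂)) (Real.log (max β₀ β₂))) ∧
    (μ Lam02 = 0 →
      chiOf ![f₀, f₁, f₂] μ ∈ Set.Icc (Real.log lam₀)
        (sSup {c : ℝ | ∃ p ∈ Set.Icc (0:ℝ) 1, ∃ ξ : ℕ → Fin 3,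
          ¬ exceptional ![f₀, f₁, f₂] p ξ ∧ lyapUpper ![f₀, f₁, f₂] p ξ = c})) :=
  stmt5_general f₀ f₁ f₂ β₀ lam₀ γ β₂ δ βpr βH lampr L h0 h1 h2 h012 μ hprob herg
end
end
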